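/- arXiv:2603.10554 — 4 statements merged into one kernel-verified Lean document; each statement's English description precedes it below -/
import Mathlib

section
/- For every z ∈ ℂ, |cos z − 1| + |cos z + 1| = 2·cosh(Im z). (Equivalently: cos maps each horizontal line {Im z = c} into the ellipse with foci ±1 whose sum of focal distances is 2 cosh c.) -/
open Real Complex

theorem cos_ellipse (z : ℂ) :
    ‖Complex.cos z - 1‖ + ‖Complex.cos z + 1‖
      = 2 * Real.cosh z.im := by
  set x := z.re
  set y := z.im
  have hz : z = (x : ℂ) + (y : ℂ) * Complex.I := (Complex.re_add_im z).symm
  have hcos : Complex.cos z =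
      (Real.cos x * Real.cosh y : ℝ) - (Real.sin x * Real.sinh y : ℝ) * Complex.I := by
    rw [hz, Complex.cos_add_mul_I]
    push_cast [← Complex.ofReal_cos, ← Complex.ofReal_sin, ← Complex.ofReal_cosh,
      ← Complex.ofReal_sinh]
    ring
  have hre : (Complex.cos z).re = Real.cos x * Real.cosh y := by
    rw [hcos]; simp [Complex.cos_ofReal_re, Complex.sin_ofReal_re, Complex.sinh_ofReal_re]
  have him : (Complex.cos z).im = -(Real.sin x * Real.sinh y) := by
    rw [hcos]; simp [Complex.cos_ofReal_re, Complex.sin_ofReal_re, Complex.sinh_ofReal_re]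
  have hc1 : Real.cos x ≤ Real.cosh y :=
    (Real.cos_le_one x).trans (Real.one_le_cosh y)
  have hc2 : -(Real.cosh y) ≤ Real.cos x :=
    le_trans (by nlinarith [Real.one_le_cosh y]) (Real.neg_one_le_cos x)
  have hpyth : Real.sin x ^ 2 = 1 - Real.cos x ^ 2 := by
    nlinarith [Real.sin_sq_add_cos_sq x]
  have hcoshsq : Real.sinh y ^ 2 = Real.cosh y ^ 2 - 1 := by
    nlinarith [Real.cosh_sq_sub_sinh_sq y]
  have h1 : ‖Complex.cos z - 1‖ = Real.cosh y - Real.cos x := by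
    rw [Complex.norm_def, Complex.normSq_apply]
    simp only [Complex.sub_re, Complex.sub_im, Complex.one_re, Complex.one_im, hre, him]
    rw [show (Real.cos x * Real.cosh y - 1) * (Real.cos x * Real.cosh y - 1) +
        (-(Real.sin x * Real.sinh y) - 0) * (-(Real.sin x * Real.sinh y) - 0)
        = (Real.cosh y - Real.cos x) ^ 2 by nlinarith]
    exact Real.sqrt_sq (by linarith)
  have h2 : ‖Complex.cos z + 1‖ = Real.cosh y + Real.cos x := by
    rw [Complex.norm_def, Complex.normSq_apply]
    simp only [Complex.add_re, Complex.add_im, Complex.one_re, Complex.one_im, hre, him]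
    rw [show (Real.cos x * Real.cosh y + 1) * (Real.cos x * Real.cosh y + 1) +
        (-(Real.sin x * Real.sinh y) + 0) * (-(Real.sin x * Real.sinh y) + 0)
        = (Real.cosh y + Real.cos x) ^ 2 by nlinarith]
    exact Real.sqrt_sq (by linarith)
  rw [h1, h2]; ring
end

section
/- Let y₀ = log(1 + √2) and v₀ = i y₀. Then 2v₀ is a fixed point of f_{v₀}(z) = v₀(cos z − 1), the free critical value −2v₀ satisfies f_{v₀}(−2v₀) = 2v₀ (so f_{v₀} is post-critically finite), and the fixed point 2v₀ is repelling: |f_{v₀}'(2v₀)| = y₀ · sinh(2y₀) = 2√2 · log(1 + √2) > 1. -/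
open Real Complex

noncomputable def cosineMap (v z : ℂ) : ℂ := v * (Complex.cos z - 1)

lemma cosh_sinh_val (y₀ : ℝ) (hy₀ : y₀ = Real.log (1 + Real.sqrt 2)) :
    Real.cosh (2 * y₀) = 3 ∧ Real.sinh (2 * y₀) = 2 * Real.sqrt 2 := by
  have hs : Real.sqrt 2 ^ 2 = 2 := Real.sq_sqrt (by norm_num)
  have hsnn : 0 ≤ Real.sqrt 2 := Real.sqrt_nonneg 2
  have hpos : (0:ℝ) < 1 + Real.sqrt 2 := by nlinarith
  have hey : Real.exp y₀ = 1 + Real.sqrt 2 := by rw [hy₀, Real.exp_log hpos]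
  have hexp : Real.exp (2 * y₀) = 3 + 2 * Real.sqrt 2 := by
    rw [two_mul, Real.exp_add, hey]; nlinarith
  have hexpneg : Real.exp (-(2 * y₀)) = 3 - 2 * Real.sqrt 2 := by
    rw [Real.exp_neg, hexp]
    have h1 : (3 + 2 * Real.sqrt 2) * (3 - 2 * Real.sqrt 2) = 1 := by nlinarith
    field_simp
    nlinarith
  constructor
  · rw [Real.cosh_eq, hexp, hexpneg]; ring
  · rw [Real.sinh_eq, hexp, hexpneg]; ring

theorem postcritically_finite_parameter
    (y₀ : ℝ) (hy₀ : y₀ = Real.log (1 + Real.sqrt 2))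
    (v₀ : ℂ) (hv₀ : v₀ = Complex.I * y₀) :
    cosineMap v₀ (2 * v₀) = 2 * v₀ ∧
    cosineMap v₀ (-2 * v₀) = 2 * v₀ ∧
    ‖deriv (cosineMap v₀) (2 * v₀)‖ = y₀ * Real.sinh (2 * y₀) ∧
    y₀ * Real.sinh (2 * y₀) = 2 * Real.sqrt 2 * Real.log (1 + Real.sqrt 2) ∧
    1 < y₀ * Real.sinh (2 * y₀) := by
  obtain ⟨hc, hsh⟩ := cosh_sinh_val y₀ hy₀
  have hsnn : 0 ≤ Real.sqrt 2 := Real.sqrt_nonneg 2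
  have hs : Real.sqrt 2 ^ 2 = 2 := Real.sq_sqrt (by norm_num)
  have hy₀nn : 0 ≤ y₀ := by
    rw [hy₀]; apply Real.log_nonneg; nlinarith
  have harg : 2 * v₀ = ((2 * y₀ : ℝ) : ℂ) * Complex.I := by
    rw [hv₀]; push_cast; ring
  have hcos : Complex.cos (2 * v₀) = 3 := by
    rw [harg, Complex.cos_mul_I, ← Complex.ofReal_cosh, hc]; norm_num
  have hsin : Complex.sin (2 * v₀) = (2 * Real.sqrt 2 : ℝ) * Complex.I := by
    rw [harg, Complex.sin_mul_I, ← Complex.ofReal_sinh, hsh]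
  have hfix : cosineMap v₀ (2 * v₀) = 2 * v₀ := by
    unfold cosineMap; rw [hcos]; ring
  refine ⟨hfix, ?_, ?_, ?_, ?_⟩
  · unfold cosineMap
    rw [show (-2 : ℂ) * v₀ = -(2 * v₀) by ring, Complex.cos_neg, hcos]; ring
  · have hderiv : deriv (cosineMap v₀) (2 * v₀) = v₀ * (-Complex.sin (2 * v₀)) := by
      have h : HasDerivAt (cosineMap v₀) (v₀ * (-Complex.sin (2 * v₀))) (2 * v₀) := by
        have := ((Complex.hasDerivAt_cos (2 * v₀)).sub_const 1).const_mul v₀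
        exact this
      exact h.deriv
    rw [hderiv, hsin, hv₀]
    have : Complex.I * (y₀ : ℂ) * -((2 * Real.sqrt 2 : ℝ) * Complex.I)
        = ((y₀ * (2 * Real.sqrt 2) : ℝ) : ℂ) := by
      push_cast
      rw [show Complex.I * (y₀:ℂ) * -((2 * (Real.sqrt 2:ℂ)) * Complex.I)
          = -(Complex.I * Complex.I) * ((y₀:ℂ) * (2 * (Real.sqrt 2:ℂ))) by ring,
        Complex.I_mul_I]
      ring
    rw [this, Complex.norm_real, Real.norm_eq_abs, _root_.abs_of_nonneg (by positivity), hsh]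
  · rw [hsh, hy₀]; ring
  · rw [hsh]
    have hlog2 : (0.6931471803 : ℝ) < Real.log 2 := Real.log_two_gt_d9
    have hmono : Real.log 2 ≤ y₀ := by
      rw [hy₀]; apply Real.log_le_log (by norm_num); nlinarith [Real.sq_sqrt (show (0:ℝ) ≤ 2 by norm_num), Real.sqrt_nonneg 2]
    have h1 : (1:ℝ) ≤ Real.sqrt 2 := by nlinarith
    nlinarith
end

section
/- Let 0 < y < log(1 + √2) and define g : [0, ∞) → [0, ∞) by g(s) = y(cosh s − 1). Then g(s) < s for all s ∈ (0, 2y], the interval [0, 2y] is invariant under g, and the sequence s₀ = 2y, s_{n+1} = g(s_n) is strictly decreasing and converges to 0. Consequently, for v = iy the orbit of the critical value −2v under f_v(z) = v(cos z − 1) converges to the fixed point 0. -/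
open Real Complex Filter

lemma convexOn_cosh' : ConvexOn ℝ Set.univ Real.cosh := by
  have h1 : ConvexOn ℝ Set.univ Real.exp := convexOn_exp
  have h2 : ConvexOn ℝ Set.univ (fun x : ℝ => Real.exp (-x)) :=
    h1.comp_affineMap (LinearMap.toAffineMap (-LinearMap.id))
  have := (h1.add h2).smul (by norm_num : (0:ℝ) ≤ 1/2)
  convert this using 1
  rotate_left 2
  funext x
  simp [Real.cosh_eq]
  ring
  · rfl
  · rfl

lemma cosh_slope {s t : ℝ} (hs : 0 ≤ s) (hst : s ≤ t) (ht : 0 < t) :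
    Real.cosh s - 1 ≤ (s / t) * (Real.cosh t - 1) := by
  have hl : 0 ≤ s / t := div_nonneg hs ht.le
  have hl1 : s / t ≤ 1 := (div_le_one ht).2 hst
  have := convexOn_cosh'.2 (Set.mem_univ 0) (Set.mem_univ t)
    (by linarith : (0:ℝ) ≤ 1 - s / t) hl (by ring)
  simp only [smul_eq_mul, mul_zero, zero_add, Real.cosh_zero] at this
  have hst' : (s / t) * t = s := div_mul_cancel₀ s ht.ne'
  rw [hst'] at this
  nlinarith [this]

theorem attracting_imaginary_axis (y : ℝ) (hy0 : 0 < y)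
    (hy : y < Real.log (1 + Real.sqrt 2))
    (g : ℝ → ℝ) (hg : g = fun s => y * (Real.cosh s - 1)) :
    (∀ s ∈ Set.Ioc (0 : ℝ) (2 * y), g s < s) ∧
    Set.MapsTo g (Set.Icc 0 (2 * y)) (Set.Icc 0 (2 * y)) ∧
    StrictAnti (fun n : ℕ => g^[n] (2 * y)) ∧
    Tendsto (fun n : ℕ => g^[n] (2 * y)) atTop (nhds 0) ∧
    Tendsto (fun n : ℕ => (cosineMap (Complex.I * y))^[n] (-2 * (Complex.I * y)))
      atTop (nhds 0) := by
  have hsqrt2 : Real.sqrt 2 ^ 2 = 2 := Real.sq_sqrt (by norm_num)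
  have hsqrt2pos : 0 < Real.sqrt 2 := Real.sqrt_pos.2 (by norm_num)
  -- cosh (2y) < 3
  have hcosh3 : Real.cosh (2 * y) < 3 := by
    have hx : (0:ℝ) < 3 + 2 * Real.sqrt 2 := by positivity
    have hlog : 2 * Real.log (1 + Real.sqrt 2) = Real.log (3 + 2 * Real.sqrt 2) := by
      rw [show (3 + 2 * Real.sqrt 2 : ℝ) = (1 + Real.sqrt 2)^2 by nlinarith [hsqrt2],
        Real.log_pow]
      push_cast; ring
    have h1 : Real.cosh (2 * y) < Real.cosh (Real.log (3 + 2 * Real.sqrt 2)) := by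
      rw [Real.cosh_lt_cosh, ← hlog]
      have h2 : 0 < Real.log (1 + Real.sqrt 2) := Real.log_pos (by nlinarith)
      rw [abs_of_pos (by linarith), abs_of_pos (by linarith)]
      linarith
    rw [Real.cosh_log hx] at h1
    have hinv : (3 + 2 * Real.sqrt 2)⁻¹ = 3 - 2 * Real.sqrt 2 := by
      rw [inv_eq_iff_eq_inv, eq_comm, inv_eq_iff_eq_inv, eq_comm, inv_eq_one_div]
      field_simp
      nlinarith [hsqrt2]
    rw [hinv] at h1
    linarith
  have h2y : 0 < 2 * y := by linarith
  -- g(2y) < 2y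
  have hg2y : g (2 * y) < 2 * y := by
    rw [hg]; simp only; nlinarith
  -- main contraction
  have hmain : ∀ s ∈ Set.Ioc (0 : ℝ) (2 * y), g s < s := by
    intro s hs
    obtain ⟨hs0, hs2y⟩ := hs
    have hslope := cosh_slope hs0.le hs2y h2y
    have hgs : g s ≤ (s / (2 * y)) * g (2 * y) := by
      rw [hg]; simp only
      calc y * (Real.cosh s - 1) ≤ y * ((s / (2*y)) * (Real.cosh (2*y) - 1)) := by
            apply mul_le_mul_of_nonneg_left hslope hy0.le
        _ = (s / (2*y)) * (y * (Real.cosh (2*y) - 1)) := by ring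
    have hlt : (s / (2 * y)) * g (2 * y) < (s / (2 * y)) * (2 * y) := by
      apply mul_lt_mul_of_pos_left hg2y (div_pos hs0 h2y)
    have : (s / (2 * y)) * (2 * y) = s := div_mul_cancel₀ s h2y.ne'
    linarith
  -- nonnegativity
  have hgnn : ∀ s : ℝ, 0 ≤ g s := by
    intro s; rw [hg]; simp only
    have := Real.one_le_cosh s
    nlinarith
  have hgpos : ∀ s : ℝ, 0 < s → 0 < g s := by
    intro s hs; rw [hg]; simp only
    have h1 : 1 < Real.cosh s := by
      rw [← Real.cosh_zero]
      rw [Real.cosh_lt_cosh]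
      simpa [abs_of_pos hs] using hs
    nlinarith
  have hmaps : Set.MapsTo g (Set.Icc 0 (2 * y)) (Set.Icc 0 (2 * y)) := by
    intro s hs
    obtain ⟨hs0, hs2y⟩ := hs
    refine ⟨hgnn s, ?_⟩
    rcases eq_or_lt_of_le hs0 with h | h
    · rw [← h, hg]; simp; linarith
    · exact le_trans (hmain s ⟨h, hs2y⟩).le hs2y
  -- iterates stay in Ioc
  have hiter : ∀ n : ℕ, g^[n] (2 * y) ∈ Set.Ioc (0 : ℝ) (2 * y) := by
    intro n
    induction n with
    | zero =>
      rw [Function.iterate_zero_apply]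
      exact ⟨h2y, le_rfl⟩
    | succ n ih =>
      rw [Function.iterate_succ_apply']
      exact ⟨hgpos _ ih.1, le_trans (hmain _ ih).le ih.2⟩
  have hanti : StrictAnti (fun n : ℕ => g^[n] (2 * y)) := by
    apply strictAnti_nat_of_succ_lt
    intro n
    simp only [Function.iterate_succ_apply']
    exact hmain _ (hiter n)
  -- convergence
  have hbdd : BddBelow (Set.range fun n : ℕ => g^[n] (2 * y)) := by
    refine ⟨0, ?_⟩
    rintro x ⟨n, rfl⟩
    exact (hiter n).1.le
  have htend := tendsto_atTop_ciInf hanti.antitone hbdd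
  set L := ⨅ n : ℕ, g^[n] (2 * y) with hL
  have hL0 : 0 ≤ L := le_ciInf fun n => (hiter n).1.le
  have hL2y : L ≤ 2 * y := by
    have := ciInf_le hbdd 0
    simpa using this
  have hgcont : Continuous g := by
    rw [hg]; continuity
  have hfix : g L = L := by
    have h1 : Tendsto (fun n : ℕ => g (g^[n] (2 * y))) atTop (nhds (g L)) :=
      (hgcont.continuousAt.tendsto).comp htend
    have h2 : Tendsto (fun n : ℕ => g^[n+1] (2 * y)) atTop (nhds L) :=
      htend.comp (tendsto_add_atTop_nat 1)
    have heq : (fun n : ℕ => g (g^[n] (2 * y))) = fun n : ℕ => g^[n+1] (2 * y) := by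
      funext n; rw [Function.iterate_succ_apply']
    rw [heq] at h1
    exact tendsto_nhds_unique h1 h2
  have hLzero : L = 0 := by
    by_contra h
    have hLpos : 0 < L := lt_of_le_of_ne hL0 (Ne.symm h)
    have := hmain L ⟨hLpos, hL2y⟩
    rw [hfix] at this
    exact lt_irrefl _ this
  rw [hLzero] at htend
  have hgval : ∀ t : ℝ, g t = y * (Real.cosh t - 1) := fun t => by rw [hg]
  have hcomplex : ∀ n : ℕ, (cosineMap (Complex.I * y))^[n+1] (-2 * (Complex.I * y)) =
      Complex.I * ((g^[n+1] (2 * y) : ℝ) : ℂ) := by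
    intro n
    induction n with
    | zero =>
      simp only [zero_add, Function.iterate_one]
      rw [cosineMap]
      have hc : Complex.cos (-2 * (Complex.I * y)) = ((Real.cosh (2 * y) : ℝ) : ℂ) := by
        rw [show (-2 : ℂ) * (Complex.I * y) = (((-(2*y) : ℝ)) : ℂ) * Complex.I by
          push_cast; ring]
        rw [Complex.cos_mul_I, ← Complex.ofReal_cosh]
        norm_num [Real.cosh_neg]
      rw [hc, hgval]
      push_cast; ring
    | succ n ih =>
      rw [Function.iterate_succ_apply', ih,
        Function.iterate_succ_apply' g (n+1), cosineMap]
      have hc : Complex.cos (Complex.I * ((g^[n+1] (2 * y) : ℝ) : ℂ)) =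
          ((Real.cosh (g^[n+1] (2 * y)) : ℝ) : ℂ) := by
        rw [mul_comm, Complex.cos_mul_I, ← Complex.ofReal_cosh]
      rw [hc, hgval]
      push_cast; ring
  have hfinal : Tendsto (fun n : ℕ => (cosineMap (Complex.I * y))^[n] (-2 * (Complex.I * y)))
      atTop (nhds 0) := by
    have h1 : Tendsto (fun n : ℕ => Complex.I * ((g^[n] (2 * y) : ℝ) : ℂ)) atTop (nhds 0) := by
      have h2 : Tendsto (fun n : ℕ => ((g^[n] (2 * y) : ℝ) : ℂ)) atTop (nhds 0) := by
        have := (Complex.continuous_ofReal.tendsto 0).comp htend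
        simpa [Function.comp_def] using this
      simpa using h2.const_mul Complex.I
    refine h1.congr' ?_
    filter_upwards [eventually_ge_atTop 1] with n hn
    obtain ⟨m, rfl⟩ := Nat.exists_eq_add_of_le hn
    rw [add_comm 1 m]
    exact (hcomplex m).symm
  exact ⟨hmain, hmaps, hanti, htend, hfinal⟩
end

section
/- Let y > log(1 + √2) and define g : [0, ∞) → [0, ∞) by g(s) = y(cosh s − 1). Then g(s) > s for all s ≥ 2y, the sequence s₀ = 2y, s_{n+1} = g(s_n) is strictly increasing, and s_n → ∞ as n → ∞. Consequently, for v = iy with y > log(1+√2), the orbit of the critical value −2v under f_v(z) = v(cos z − 1) escapes to infinity. -/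
open Real Complex Filter

/-- tangent-line lower bound for cosh -/
lemma cosh_lower {a s : ℝ} (ha : 0 ≤ a) (h : a ≤ s) :
    Real.cosh a + (s - a) * Real.sinh a ≤ Real.cosh s := by
  have hd : 0 ≤ s - a := by linarith
  have h1 : Real.cosh s = Real.cosh a * Real.cosh (s - a) + Real.sinh a * Real.sinh (s - a) := by
    rw [← Real.cosh_add]; ring_nf
  have h2 : (1 : ℝ) ≤ Real.cosh (s - a) := Real.one_le_cosh _
  have h3 : s - a ≤ Real.sinh (s - a) := Real.self_le_sinh_iff.2 hd
  have h4 : 0 ≤ Real.sinh a := Real.sinh_nonneg_iff.2 ha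
  have h5 : 0 < Real.cosh a := Real.cosh_pos a
  nlinarith [mul_le_mul_of_nonneg_left h3 h4]

theorem escaping_imaginary_axis (y : ℝ)
    (hy : Real.log (1 + Real.sqrt 2) < y)
    (g : ℝ → ℝ) (hg : g = fun s => y * (Real.cosh s - 1)) :
    (∀ s : ℝ, 2 * y ≤ s → s < g s) ∧
    StrictMono (fun n : ℕ => g^[n] (2 * y)) ∧
    Tendsto (fun n : ℕ => g^[n] (2 * y)) atTop atTop ∧
    Tendsto (fun n : ℕ =>
        ‖(cosineMap (Complex.I * y))^[n] (-2 * (Complex.I * y))‖)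
      atTop atTop := by
  have hs2 : (1.414 : ℝ) < Real.sqrt 2 := by
    nlinarith [Real.sq_sqrt (by norm_num : (2:ℝ) ≥ 0), Real.sqrt_nonneg 2]
  have hs2' : Real.sqrt 2 < 1.415 := by
    nlinarith [Real.sq_sqrt (by norm_num : (2:ℝ) ≥ 0), Real.sqrt_nonneg 2]
  have hlog2 : Real.log 2 < Real.log (1 + Real.sqrt 2) :=
    Real.log_lt_log (by norm_num) (by nlinarith)
  have hy0 : (0.693 : ℝ) < y := by
    have := Real.log_two_gt_d9; linarith
  have hypos : 0 < y := by linarith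
  -- cosh (2y) > 3
  have hkey0 : (3 : ℝ) < Real.cosh (2 * y) := by
    have hlog : Real.log (3 + 2 * Real.sqrt 2) < 2 * y := by
      have hsq : (3 + 2 * Real.sqrt 2) = (1 + Real.sqrt 2)^2 := by
        nlinarith [Real.sq_sqrt (by norm_num : (2:ℝ) ≥ 0)]
      have : Real.log (3 + 2 * Real.sqrt 2) = 2 * Real.log (1 + Real.sqrt 2) := by
        rw [hsq, Real.log_pow]; norm_num
      linarith
    have hpos : (0:ℝ) < 3 + 2 * Real.sqrt 2 := by nlinarith
    have hc : Real.cosh (Real.log (3 + 2 * Real.sqrt 2)) = 3 := by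
      rw [Real.cosh_log hpos]
      have hinv : (3 + 2 * Real.sqrt 2)⁻¹ = 3 - 2 * Real.sqrt 2 :=
        inv_eq_of_mul_eq_one_right (by nlinarith [Real.sq_sqrt (by norm_num : (2:ℝ) ≥ 0)])
      rw [hinv]; ring
    calc (3:ℝ) = Real.cosh (Real.log (3 + 2 * Real.sqrt 2)) := hc.symm
      _ < Real.cosh (2 * y) := by
          rw [Real.cosh_lt_cosh]
          rw [_root_.abs_of_nonneg (Real.log_nonneg (by nlinarith)), _root_.abs_of_nonneg (by positivity : (0:ℝ) ≤ 2 * y)]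
          exact hlog
  -- sinh(2y) ≥ 2√2 and y * sinh(2y) > 1
  have hsinh : 2 * Real.sqrt 2 ≤ Real.sinh (2 * y) := by
    have hpos : (0:ℝ) < 3 + 2 * Real.sqrt 2 := by nlinarith
    have hs : Real.sinh (Real.log (3 + 2 * Real.sqrt 2)) = 2 * Real.sqrt 2 := by
      rw [Real.sinh_log hpos]
      have hinv : (3 + 2 * Real.sqrt 2)⁻¹ = 3 - 2 * Real.sqrt 2 :=
        inv_eq_of_mul_eq_one_right (by nlinarith [Real.sq_sqrt (by norm_num : (2:ℝ) ≥ 0)])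
      rw [hinv]; ring
    rw [← hs, Real.sinh_le_sinh]
    have hsq : (3 + 2 * Real.sqrt 2) = (1 + Real.sqrt 2)^2 := by
      nlinarith [Real.sq_sqrt (by norm_num : (2:ℝ) ≥ 0)]
    have : Real.log (3 + 2 * Real.sqrt 2) = 2 * Real.log (1 + Real.sqrt 2) := by
      rw [hsq, Real.log_pow]; norm_num
    linarith
  have hys : 1 < y * Real.sinh (2 * y) := by nlinarith
  -- Part 1
  have part1 : ∀ s : ℝ, 2 * y ≤ s → s < g s := by
    intro s hs
    have hc := cosh_lower (a := 2 * y) (by linarith) hs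
    rw [hg]
    simp only
    nlinarith
  -- orbit stays ≥ 2y
  have horb : ∀ n : ℕ, 2 * y ≤ g^[n] (2 * y) := by
    intro n
    induction n with
    | zero => simp
    | succ n ih =>
      rw [Function.iterate_succ_apply']
      exact le_of_lt (lt_of_le_of_lt ih (part1 _ ih))
  have part2 : StrictMono (fun n : ℕ => g^[n] (2 * y)) := by
    apply strictMono_nat_of_lt_succ
    intro n
    rw [Function.iterate_succ_apply']
    exact part1 _ (horb n)
  -- uniform gap
  set c : ℝ := y * (Real.cosh (2 * y) - 1) - 2 * y with hc
  have hcpos : 0 < c := by rw [hc]; nlinarith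
  have hgap : ∀ s : ℝ, 2 * y ≤ s → s + c ≤ g s := by
    intro s hs
    have hcl := cosh_lower (a := 2 * y) (by linarith) hs
    rw [hg]
    simp only
    nlinarith
  have hlinear : ∀ n : ℕ, 2 * y + n * c ≤ g^[n] (2 * y) := by
    intro n
    induction n with
    | zero => simp
    | succ n ih =>
      rw [Function.iterate_succ_apply']
      have := hgap _ (horb n)
      push_cast
      linarith
  have part3 : Tendsto (fun n : ℕ => g^[n] (2 * y)) atTop atTop := by
    apply tendsto_atTop_mono hlinear
    apply tendsto_atTop_add_const_left
    exact Tendsto.atTop_mul_const hcpos tendsto_natCast_atTop_atTop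
  refine ⟨part1, part2, part3, ?_⟩
  -- the complex orbit has modulus g^[n] (2y)
  have habs : ∀ n : ℕ,
      ‖(cosineMap (Complex.I * y))^[n] (-2 * (Complex.I * y))‖ = g^[n] (2 * y) := by
    have hstep : ∀ t : ℝ, cosineMap (Complex.I * y) (Complex.I * t) = Complex.I * (g t) := by
      intro t
      unfold cosineMap
      have : Complex.cos (Complex.I * t) = (Real.cosh t : ℂ) := by
        rw [mul_comm, Complex.cos_mul_I, Complex.ofReal_cosh]
      rw [this, hg]
      push_cast
      ring
    have hiter : ∀ n : ℕ,
        (cosineMap (Complex.I * y))^[n + 1] (-2 * (Complex.I * y))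
          = Complex.I * (g^[n + 1] (2 * y)) := by
      intro n
      induction n with
      | zero =>
        simp only [zero_add, Function.iterate_one]
        have h1 : (-2 : ℂ) * (Complex.I * y) = Complex.I * ((-(2 * y) : ℝ) : ℂ) := by
          push_cast; ring
        have h2 : g (-(2 * y)) = g (2 * y) := by rw [hg]; simp
        rw [h1, hstep, h2]
      | succ n ih =>
        rw [Function.iterate_succ_apply', ih, hstep, ← Function.iterate_succ_apply' g]
    intro n
    cases n with
    | zero =>
      simp only [Function.iterate_zero, id]
      rw [show (-2 : ℂ) * (Complex.I * y) = ((-(2*y) : ℝ) : ℂ) * Complex.I by push_cast; ring]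
      rw [norm_mul, Complex.norm_real, Real.norm_eq_abs, Complex.norm_I]
      rw [_root_.abs_of_nonpos (by linarith : -(2*y) ≤ 0)]
      ring
    | succ n =>
      rw [hiter n, norm_mul, Complex.norm_I, Complex.norm_real, Real.norm_eq_abs, one_mul,
        _root_.abs_of_nonneg (by linarith [horb (n+1)])]
  have : (fun n : ℕ => ‖(cosineMap (Complex.I * y))^[n] (-2 * (Complex.I * y))‖)
      = fun n : ℕ => g^[n] (2 * y) := funext habs
  rw [this]
  exact part3
end
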